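/- arXiv:2404.00907 — 2 statements merged into one kernel-verified Lean document; each statement's English description precedes it below -/
import Mathlib

section
/- Let q > 0, B > 0, c > 2q, and let α(t,x) = ∫_ℝ G(t, x-y)·B·e^{-q|y|} dy with G the heat kernel. Then for every t > 0: α(t, ct) ≥ (B/2)·e^{-(qc - q²)t}. -/
open MeasureTheory Real Set

theorem heat_evolution_lower_bound (q B c : ℝ) (hq : 0 < q) (hB : 0 < B) (hc : 2 * q < c) :
    ∀ t : ℝ, 0 < t →
      B / 2 * Real.exp (-(q * c - q ^ 2) * t)
        ≤ ∫ y : ℝ, Real.exp (-(c * t - y) ^ 2 / (4 * t)) / Real.sqrt (4 * Real.pi * t)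
            * (B * Real.exp (-q * |y|)) := by
  intro t ht
  have h4t : (0:ℝ) < 4 * t := by linarith
  have hb : (0:ℝ) < 1 / (4 * t) := by positivity
  have hs : (0:ℝ) < Real.sqrt (4 * Real.pi * t) := by
    apply Real.sqrt_pos.2; positivity
  set m : ℝ := (c - 2 * q) * t with hm
  have hm0 : 0 < m := mul_pos (by linarith) ht
  set f : ℝ → ℝ := fun y => Real.exp (-(c * t - y) ^ 2 / (4 * t)) / Real.sqrt (4 * Real.pi * t)
            * (B * Real.exp (-q * |y|)) with hf
  set C : ℝ := B * Real.exp (-(q * c - q ^ 2) * t) / Real.sqrt (4 * Real.pi * t) with hC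
  have hC0 : 0 ≤ C := by positivity
  -- the shifted Gaussian, integrable
  have hgauss : Integrable (fun y : ℝ => Real.exp (-(1 / (4 * t)) * (y - m) ^ 2)) :=
    (integrable_exp_neg_mul_sq hb).comp_sub_right m
  have hgauss' : Integrable (fun y : ℝ => Real.exp (-(1 / (4 * t)) * (y - c * t) ^ 2)) :=
    (integrable_exp_neg_mul_sq hb).comp_sub_right (c * t)
  have hfnn : ∀ y, 0 ≤ f y := fun y => by positivity
  have hfi : Integrable f := by
    apply ((hgauss'.const_mul (B / Real.sqrt (4 * Real.pi * t)))).mono' ?_ ?_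
    · apply Continuous.aestronglyMeasurable; fun_prop
    · filter_upwards with y
      rw [norm_of_nonneg (hfnn y), hf]
      have h1 : Real.exp (-(c * t - y) ^ 2 / (4 * t))
          = Real.exp (-(1 / (4 * t)) * (y - c * t) ^ 2) := by
        congr 1; field_simp; ring
      have h2 : Real.exp (-q * |y|) ≤ 1 := by
        apply Real.exp_le_one_iff.2
        have := abs_nonneg y
        nlinarith
      calc Real.exp (-(c * t - y) ^ 2 / (4 * t)) / Real.sqrt (4 * Real.pi * t)
            * (B * Real.exp (-q * |y|))
          ≤ Real.exp (-(c * t - y) ^ 2 / (4 * t)) / Real.sqrt (4 * Real.pi * t) * (B * 1) := by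
            apply mul_le_mul_of_nonneg_left _ (by positivity)
            exact mul_le_mul_of_nonneg_left h2 hB.le
        _ = B / Real.sqrt (4 * Real.pi * t) * Real.exp (-(1 / (4 * t)) * (y - c * t) ^ 2) := by
            rw [h1]; ring
  have key : ∀ y ∈ Ioi (0:ℝ), f y = C * Real.exp (-(1 / (4 * t)) * (y - m) ^ 2) := by
    intro y hy
    have hy0 : (0:ℝ) < y := hy
    have key2 : Real.exp (-(c * t - y) ^ 2 / (4 * t)) * Real.exp (-q * y)
        = Real.exp (-(q * c - q ^ 2) * t) * Real.exp (-(1 / (4 * t)) * (y - m) ^ 2) := by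
      rw [← Real.exp_add, ← Real.exp_add]
      congr 1
      field_simp
      ring
    simp only [hf, hC, abs_of_pos hy0]
    linear_combination B / Real.sqrt (4 * Real.pi * t) * key2
  calc B / 2 * Real.exp (-(q * c - q ^ 2) * t)
      = C * (Real.sqrt (4 * Real.pi * t) / 2) := by
        rw [hC]; field_simp
    _ = C * ∫ y in Ioi m, Real.exp (-(1 / (4 * t)) * (y - m) ^ 2) := by
        congr 1
        have := (measurePreserving_add_right volume m).setIntegral_preimage_emb
          (MeasurableEquiv.addRight m).measurableEmbedding
          (fun y => Real.exp (-(1 / (4 * t)) * (y - m) ^ 2)) (Ioi m)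
        rw [← this, preimage_add_const_Ioi, sub_self]
        simp only [add_sub_cancel_right]
        rw [integral_gaussian_Ioi]
        rw [show Real.pi / (1 / (4 * t)) = 4 * Real.pi * t by field_simp]
    _ ≤ C * ∫ y in Ioi (0:ℝ), Real.exp (-(1 / (4 * t)) * (y - m) ^ 2) := by
        apply mul_le_mul_of_nonneg_left _ hC0
        apply setIntegral_mono_set hgauss.integrableOn
        · filter_upwards with y using Real.exp_nonneg _
        · exact HasSubset.Subset.eventuallyLE (Ioi_subset_Ioi hm0.le)
    _ = ∫ y in Ioi (0:ℝ), f y := by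
        rw [← integral_const_mul]
        exact (setIntegral_congr_fun measurableSet_Ioi key).symm
    _ ≤ ∫ y, f y := setIntegral_le_integral hfi (ae_of_all _ hfnn)
end

section
/- Let s > 0, g > 0, b > 0 with g < 1, set C* = (1+s)/(1+sg), H* = (1-g)/(1+sg), and ν = min{C*, b·H*}. Then for all C, H with C* ≤ C ≤ 1 + s and H* ≤ H ≤ 1: -b·g·(C - C*)² - b·s·(H - H*)² ≤ -ν·( b·g·(C - C* - C*·log(C/C*)) + s·(H - H* - H*·log(H/H*)) ). That is, on this region the Lyapunov function Φ(C,H) = bg(C - C* - C* log(C/C*)) + s(H - H* - H* log(H/H*)) satisfies the dissipation inequality V(C,H)·∇Φ(C,H) ≤ -ν·Φ(C,H), where V(C,H) = (C(1-C+sH), bH(1-H-gC)). -/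
lemma phi_bounds (x₀ x : ℝ) (h0 : 0 < x₀) (hx : x₀ ≤ x) :
    0 ≤ x - x₀ - x₀ * Real.log (x / x₀) ∧
    x - x₀ - x₀ * Real.log (x / x₀) ≤ (x - x₀) ^ 2 / x₀ := by
  have hxpos : 0 < x := lt_of_lt_of_le h0 hx
  have h1 : Real.log (x / x₀) ≤ x / x₀ - 1 :=
    Real.log_le_sub_one_of_pos (div_pos hxpos h0)
  have h2 : Real.log (x₀ / x) ≤ x₀ / x - 1 :=
    Real.log_le_sub_one_of_pos (div_pos h0 hxpos)
  have h3 : Real.log (x₀ / x) = - Real.log (x / x₀) := by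
    rw [Real.log_div (ne_of_gt h0) (ne_of_gt hxpos),
        Real.log_div (ne_of_gt hxpos) (ne_of_gt h0)]
    ring
  rw [h3] at h2
  constructor
  · have := mul_le_mul_of_nonneg_left h1 h0.le
    rw [mul_sub, mul_div_cancel₀ _ (ne_of_gt h0)] at this
    linarith
  · -- from h2 : -log(x/x₀) ≤ x₀/x - 1, so log(x/x₀) ≥ 1 - x₀/x = (x - x₀)/x
    have h4 : 1 - x₀ / x ≤ Real.log (x / x₀) := by linarith
    have h5 : x₀ * (1 - x₀ / x) ≤ x₀ * Real.log (x / x₀) :=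
      mul_le_mul_of_nonneg_left h4 h0.le
    have hxne : x ≠ 0 := ne_of_gt hxpos
    have keq : x - x₀ - x₀ * (1 - x₀ / x) = (x - x₀) ^ 2 / x := by
      field_simp
    have kle : (x - x₀) ^ 2 / x ≤ (x - x₀) ^ 2 / x₀ :=
      div_le_div_of_nonneg_left (by positivity) h0 hx
    linarith

theorem lyapunov_dissipation_inequality (s g b : ℝ) (hs : 0 < s) (hg0 : 0 < g)
    (hg1 : g < 1) (hb : 0 < b) :
    ∀ C H : ℝ,
      (1 + s) / (1 + s * g) ≤ C → C ≤ 1 + s →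
      (1 - g) / (1 + s * g) ≤ H → H ≤ 1 →
      -(b * g * (C - (1 + s) / (1 + s * g)) ^ 2)
          - b * s * (H - (1 - g) / (1 + s * g)) ^ 2
        ≤ -(min ((1 + s) / (1 + s * g)) (b * ((1 - g) / (1 + s * g))))
            * (b * g * (C - (1 + s) / (1 + s * g)
                  - (1 + s) / (1 + s * g) * Real.log (C / ((1 + s) / (1 + s * g))))
              + s * (H - (1 - g) / (1 + s * g)
                  - (1 - g) / (1 + s * g) * Real.log (H / ((1 - g) / (1 + s * g))))) := by
  intro C H hC1 hC2 hH1 hH2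
  set Cs := (1 + s) / (1 + s * g) with hCs
  set Hs := (1 - g) / (1 + s * g) with hHs
  have hden : 0 < 1 + s * g := by positivity
  have hCs0 : 0 < Cs := div_pos (by linarith) hden
  have hHs0 : 0 < Hs := div_pos (by linarith) hden
  obtain ⟨hΦC0, hΦC1⟩ := phi_bounds Cs C hCs0 hC1
  obtain ⟨hΦH0, hΦH1⟩ := phi_bounds Hs H hHs0 hH1
  set ΦC := C - Cs - Cs * Real.log (C / Cs) with hPC
  set ΦH := H - Hs - Hs * Real.log (H / Hs) with hPH
  set ν := min Cs (b * Hs) with hν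
  have hν0 : 0 ≤ ν := le_min hCs0.le (by positivity)
  have hνC : ν ≤ Cs := min_le_left _ _
  have hνH : ν ≤ b * Hs := min_le_right _ _
  have e1 : ν * ΦC ≤ (C - Cs) ^ 2 := by
    calc ν * ΦC ≤ Cs * ΦC := mul_le_mul_of_nonneg_right hνC hΦC0
    _ ≤ Cs * ((C - Cs) ^ 2 / Cs) := mul_le_mul_of_nonneg_left hΦC1 hCs0.le
    _ = (C - Cs) ^ 2 := mul_div_cancel₀ _ (ne_of_gt hCs0)
  have e2 : ν * ΦH ≤ b * (H - Hs) ^ 2 := by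
    calc ν * ΦH ≤ (b * Hs) * ΦH := mul_le_mul_of_nonneg_right hνH hΦH0
    _ ≤ (b * Hs) * ((H - Hs) ^ 2 / Hs) := mul_le_mul_of_nonneg_left hΦH1 (by positivity)
    _ = b * (H - Hs) ^ 2 := by field_simp
  nlinarith [mul_le_mul_of_nonneg_left e1 (mul_pos hb hg0).le,
    mul_le_mul_of_nonneg_left e2 hs.le]
end
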